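/- arXiv:0802.4372 — 3 statements merged into one kernel-verified Lean document; each statement's English description precedes it below -/
import Mathlib

section
/- Let Γ be a group acting on a set X. Suppose u : Γ → (X →₀ ℂ) is a 1-cocycle valued in finitely supported functions on X. Let a, b ∈ Γ commute, and let E ∈ X satisfy a·E = E. If the elements bⁿ·E for n ∈ ℤ are pairwise distinct, then the coefficient of E in u(a) is zero. -/
/-- Let `u : Γ → (X →₀ ℂ)` be a 1-cocycle for the action `(g·f)(y) = f(g⁻¹y)`.
If `a` and `b` commute, `a·E = E`, and the points `bⁿ·E` (`n : ℤ`) are pairwise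
distinct, then the coefficient of `E` in `u(a)` is zero. -/
theorem stmt2 {G X : Type*} [Group G] [MulAction G X]
    (u : G → (X →₀ ℂ))
    (hu : ∀ g h : G, ∀ y : X, u (g * h) y = u g y + u h (g⁻¹ • y))
    (a b : G) (hab : a * b = b * a)
    (E : X) (hE : a • E = E)
    (hdist : Function.Injective fun n : ℤ => b ^ n • E) :
    u a E = 0 := by
  have haE : a⁻¹ • E = E := by
    conv_lhs => rw [← hE]
    rw [inv_smul_smul]
  have key : ∀ n : ℤ, u a ((b ^ n)⁻¹ • E) = u a E := by
    intro n
    have hcomm : a * b ^ n = b ^ n * a := ((show Commute a b from hab).zpow_right n).eq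
    have h1 := hu a (b ^ n) E
    have h2 := hu (b ^ n) a E
    rw [hcomm, h2, haE] at h1
    linear_combination h1
  by_contra h
  have hmem : ∀ n : ℤ, b ^ n • E ∈ (u a).support := by
    intro n
    have := key (-n)
    rw [← zpow_neg, neg_neg] at this
    simpa [Finsupp.mem_support_iff, this] using h
  have hinf : ((u a).support : Set X).Infinite :=
    Set.infinite_of_injective_forall_mem hdist hmem
  exact hinf ((u a).support.finite_toSet)
end

section
/- Let Γ be a group acting on an infinite set X. If every almost invariant coloring of X with values in any set is trivial (equivalent to a constant coloring), then the natural map H⁰(Γ, Map(X,ℂ)) → H⁰(Γ, Map(X,ℂ)/Fin(X,ℂ)) is surjective, where Fin(X,ℂ) denotes finitely supported functions. -/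
universe u

/-- If every almost invariant coloring of `X` (with values in any set) is
trivial, then `H⁰(Γ, Map(X,ℂ)) → H⁰(Γ, Map(X,ℂ)/Fin(X,ℂ))` is surjective:
every `v : X → ℂ` whose class mod finitely supported functions is `Γ`-invariant
differs from an actual `Γ`-invariant function by a finitely supported one. -/
theorem stmt9 {G : Type*} {X : Type*} [Group G] [MulAction G X] [Infinite X]
    (hcolor : ∀ (C : Type u) (c : X → C),
      (∀ g : G, {x : X | c (g • x) ≠ c x}.Finite) → ∃ z : C, {x : X | c x ≠ z}.Finite) :
    ∀ v : X → ℂ, (∀ g : G, {x : X | v (g⁻¹ • x) - v x ≠ 0}.Finite) →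
      ∃ w : X → ℂ, (∀ (g : G) (x : X), w (g⁻¹ • x) = w x) ∧
        {x : X | v x - w x ≠ 0}.Finite := by
  intro v hv
  obtain ⟨z, hz⟩ := hcolor (ULift.{u} ℂ) (fun x => ULift.up (v x)) (by
    intro g
    have := hv g⁻¹
    simp only [inv_inv] at this
    apply this.subset
    intro x hx
    simp only [Set.mem_setOf_eq] at hx ⊢
    intro h
    exact hx (congrArg ULift.up (sub_eq_zero.mp h))
  )
  refine ⟨fun _ => z.down, fun _ _ => rfl, ?_⟩
  apply hz.subset
  intro x hx
  simp only [Set.mem_setOf_eq] at hx ⊢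
  intro h
  exact hx (sub_eq_zero.mpr (congrArg ULift.down h))
end

section
/- Let Γ be a group acting on a set X and let u : Γ → (X →₀ ℂ) be a 1-cocycle. Suppose a, b ∈ Γ commute and E ∈ X is fixed by a. If u(a) has coefficient x ≠ 0 at E, then u(a) has coefficient x at b⁻ⁿ·E for every n ≥ 0; consequently, if the orbit {bⁿE : n ∈ ℤ} is infinite, then x = 0. -/
/-!
Since `a` and `bⁿ` commute, expanding `u(a bⁿ) = u(bⁿ a)` with the cocycle identity at a point
`y` fixed by `a` gives `u(a)(b⁻ⁿ y) = u(a)(y)`. So a nonzero coefficient of `u(a)` at `E` recurs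
along the whole forward `b⁻¹`-orbit of `E`; as `u(a)` is finitely supported, that orbit is finite,
so `E` is `b`-periodic and its full `b`-orbit is finite.
-/

open Set MulAction

theorem cocycle_apply_inv_smul_of_commute {G X A : Type*} [Group G] [MulAction G X]
    [AddCancelCommMonoid A] {u : G → X → A}
    (hu : ∀ g h : G, ∀ y : X, u (g * h) y = u g y + u h (g⁻¹ • y))
    {a g : G} (hag : Commute a g) {y : X} (hy : a • y = y) :
    u a (g⁻¹ • y) = u a y := by
  have hy' : a⁻¹ • y = y := inv_smul_eq_iff.mpr hy.symm
  have h := hu g a y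
  rw [← hag.eq, hu a g y, hy', add_comm] at h
  exact (add_left_cancel h).symm

namespace MulAction

variable {G X : Type*} [Group G] [MulAction G X]

theorem period_ne_zero_of_finite_range_pow_smul {g : G} {y : X}
    (h : (range fun n : ℕ => g ^ n • y).Finite) : period g y ≠ 0 := by
  obtain ⟨m, l, hml, heq⟩ := h.exists_lt_map_eq_of_forall_mem (fun n => mem_range_self n)
  have hfix : g ^ ((l : ℤ) - m) • y = y := by
    rw [show g ^ ((l : ℤ) - m) = (g ^ m)⁻¹ * g ^ l by group, mul_smul, ← heq, inv_smul_smul]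
  intro hp
  have hdvd := zpow_smul_eq_iff_period_dvd.mp hfix
  rw [hp, Nat.cast_zero, zero_dvd_iff] at hdvd
  omega

theorem finite_range_zpow_smul_of_period_ne_zero {g : G} {y : X} (h : period g y ≠ 0) :
    (range fun n : ℤ => g ^ n • y).Finite := by
  refine ((finite_Iio (period g y)).image fun n : ℕ => g ^ n • y).subset ?_
  rintro _ ⟨n, rfl⟩
  have hp : (0 : ℤ) < period g y := by exact_mod_cast Nat.pos_of_ne_zero h
  have hmod := Int.emod_nonneg n hp.ne'
  refine ⟨(n % period g y).toNat, ?_, ?_⟩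
  · have := Int.emod_lt_of_pos n hp
    rw [mem_Iio]
    omega
  · dsimp only
    rw [← zpow_natCast, Int.toNat_of_nonneg hmod, zpow_mod_period_smul]

end MulAction

theorem stmt15_general {G X : Type*} [Group G] [MulAction G X]
    (u : G → (X →₀ ℂ))
    (hu : ∀ g h : G, ∀ y : X, u (g * h) y = u g y + u h (g⁻¹ • y))
    (a b : G) (hab : a * b = b * a)
    (E : X) (hE : a • E = E)
    (x : ℂ) (hx : u a E = x) :
    (∀ n : ℕ, u a (b⁻¹ ^ n • E) = x) ∧
    ((Set.range fun n : ℤ => b ^ n • E).Infinite → x = 0) := by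
  have hpow (n : ℕ) : u a (b⁻¹ ^ n • E) = x := by
    rw [inv_pow, cocycle_apply_inv_smul_of_commute (u := fun g => ⇑(u g)) hu
      (Commute.pow_right hab n) hE, hx]
  refine ⟨hpow, fun hinf => by_contra fun hx0 => hinf ?_⟩
  have hfin : (range fun n : ℕ => b⁻¹ ^ n • E).Finite :=
    (u a).support.finite_toSet.subset <| by
      rintro _ ⟨n, rfl⟩
      exact Finsupp.mem_support_iff.mpr ((hpow n).trans_ne hx0)
  apply finite_range_zpow_smul_of_period_ne_zero
  rw [← period_inv]
  exact period_ne_zero_of_finite_range_pow_smul hfin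

/-- Let `u : Γ → (X →₀ ℂ)` be a 1-cocycle (action `(g·f)(y) = f(g⁻¹y)`), let
`a, b ∈ Γ` commute and let `E ∈ X` be fixed by `a`. If `u(a)` has coefficient
`x ≠ 0` at `E`, then `u(a)` has coefficient `x` at `b⁻ⁿ·E` for every `n ≥ 0`;
consequently, if the orbit `{bⁿ·E : n ∈ ℤ}` is infinite, then `x = 0`. -/
theorem stmt15 {G X : Type*} [Group G] [MulAction G X]
    (u : G → (X →₀ ℂ))
    (hu : ∀ g h : G, ∀ y : X, u (g * h) y = u g y + u h (g⁻¹ • y))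
    (a b : G) (hab : a * b = b * a)
    (E : X) (hE : a • E = E)
    (x : ℂ) (hx : u a E = x) (hx0 : x ≠ 0) :
    (∀ n : ℕ, u a (b⁻¹ ^ n • E) = x) ∧
    ((Set.range fun n : ℤ => b ^ n • E).Infinite → x = 0) :=
  stmt15_general u hu a b hab E hE x hx
end
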